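/- Let μ ≥ 0, L > 0, and let f : V → ℝ be differentiable, μ-convex, with L-Lipschitz gradient and global minimizer x*. Let α > 0 satisfy Lα² = γ(2 + α) with γ > 0, let β = 1/(Lα), and suppose y, v⁺, x⁺ and γ⁺ are obtained from x, v, γ by one step of the extra-gradient scheme: (y - x)/α = v - y - β∇f(x), (v⁺ - v)/α = (μ/γ)(y - v⁺) - (1/γ)∇f(y), (γ⁺ - γ)/α = μ - γ⁺, x⁺ = y - (1/L)∇f(y). Then L(x⁺, v⁺, γ⁺) - L(x, v, γ) ≤ -α·L(x⁺, v⁺, γ⁺) - (1/(2L))‖∇f(x)‖². -/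

import Mathlib

open scoped RealInnerProductSpace

/-!
Four inequalities are added up: the descent lemma for the gradient step `x⁺ = y - ∇f(y)/L`
(weight `1 + α`), the interpolation inequality
`f x ≥ f y + ⟪∇f y, x - y⟫ + ‖∇f x - ∇f y‖² / (2L)` of smooth convex functions (weight `1`),
strong convexity between `y` and `x*` (weight `α`), and convexity of `‖·‖²` at `v⁺`, which is the
`(γ, αμ)`-weighted mean of `v - (α/γ)∇f(y)` and `y` (weight `1/2`). The coupling
`Lα² = γ(2 + α)` is exactly what makes the `‖∇f y‖²` terms cancel.
-/

theorem image_one_le_of_hasDerivAt_le {φ φ' : ℝ → ℝ} {a c : ℝ}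
    (hφ : ∀ t, HasDerivAt φ (φ' t) t) (hle : ∀ t ∈ Set.Ico (0 : ℝ) 1, φ' t ≤ a + c * t) :
    φ 1 ≤ φ 0 + a + c / 2 := by
  have hB (t : ℝ) : HasDerivAt (fun t ↦ φ 0 + a * t + c / 2 * t ^ 2) (a + c * t) t :=
    ((((hasDerivAt_id' t).const_mul a).const_add (φ 0)).add
      ((hasDerivAt_pow 2 t).const_mul (c / 2))).congr_deriv (by norm_num; ring)
  have := image_le_of_deriv_right_le_deriv_boundary
    (fun t _ ↦ (hφ t).continuousAt.continuousWithinAt) (fun t _ ↦ (hφ t).hasDerivWithinAt)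
    (by simp) (fun t _ ↦ (hB t).continuousAt.continuousWithinAt)
    (fun t _ ↦ (hB t).hasDerivWithinAt) hle (Set.right_mem_Icc.2 zero_le_one)
  linarith

section InnerProductSpace

variable {V : Type*} [NormedAddCommGroup V] [InnerProductSpace ℝ V]

theorem norm_smul_add_smul_sq_le {p q : ℝ} (hp : 0 ≤ p) (hq : 0 ≤ q) (u w : V) :
    ‖p • u + q • w‖ ^ 2 ≤ (p + q) * (p * ‖u‖ ^ 2 + q * ‖w‖ ^ 2) := by
  have h : (p + q) * (p * ‖u‖ ^ 2 + q * ‖w‖ ^ 2) - ‖p • u + q • w‖ ^ 2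
      = p * q * ‖u - w‖ ^ 2 := by
    simp only [norm_add_sq_real, norm_sub_sq_real, norm_smul, real_inner_smul_left,
      real_inner_smul_right, mul_pow, Real.norm_eq_abs, sq_abs]
    ring
  nlinarith [mul_nonneg (mul_nonneg hp hq) (sq_nonneg ‖u - w‖)]

theorem mul_norm_sq_le_of_smul_eq {p q c : ℝ} (hp : 0 < p) (hq : 0 ≤ q) {w a b g : V}
    (hw : (p + q) • w = p • a + q • b - c • g) :
    (p + q) * ‖w‖ ^ 2 ≤ p * ‖a‖ ^ 2 - 2 * c * ⟪g, a⟫ + c ^ 2 / p * ‖g‖ ^ 2 + q * ‖b‖ ^ 2 := by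
  have hpq : 0 < p + q := by linarith
  have hw' : (p + q) • w = p • (a - (c / p) • g) + q • b := by
    rw [hw, smul_sub, smul_smul, mul_div_cancel₀ c hp.ne']
    abel
  have h := norm_smul_add_smul_sq_le hp.le hq (a - (c / p) • g) b
  rw [← hw', norm_smul, Real.norm_eq_abs, abs_of_pos hpq, mul_pow, sq, mul_assoc] at h
  have h' := le_of_mul_le_mul_left h hpq
  rw [norm_sub_sq_real, real_inner_smul_right, norm_smul, mul_pow, Real.norm_eq_abs, sq_abs,
    real_inner_comm] at h'
  refine h'.trans_eq ?_
  field_simp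

variable [CompleteSpace V] {f : V → ℝ} {f' : V → V} {L : ℝ}

theorem hasDerivAt_comp_add_smul (hf : ∀ z, HasGradientAt f (f' z) z) (w u : V) (t : ℝ) :
    HasDerivAt (fun t : ℝ ↦ f (w + t • u)) ⟪f' (w + t • u), u⟫ t := by
  have h := (hf (w + t • u)).hasFDerivAt.comp_hasDerivAt t
    (((hasDerivAt_id t).smul_const u).const_add w)
  simp only [id_eq, one_smul, InnerProductSpace.toDual_apply_apply] at h
  exact h

theorem le_add_inner_add_sq_of_lipschitz_gradient (hf : ∀ z, HasGradientAt f (f' z) z)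
    (hlip : ∀ z w, ‖f' z - f' w‖ ≤ L * ‖z - w‖) (z w : V) :
    f z ≤ f w + ⟪f' w, z - w⟫ + L / 2 * ‖z - w‖ ^ 2 := by
  have key := image_one_le_of_hasDerivAt_le (hasDerivAt_comp_add_smul hf w (z - w))
    (a := ⟪f' w, z - w⟫) (c := L * ‖z - w‖ ^ 2) fun t ht ↦ by
      have hdist : ‖f' (w + t • (z - w)) - f' w‖ ≤ L * (t * ‖z - w‖) := by
        simpa [norm_smul, abs_of_nonneg ht.1] using hlip (w + t • (z - w)) w
      calc ⟪f' (w + t • (z - w)), z - w⟫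
          = ⟪f' w, z - w⟫ + ⟪f' (w + t • (z - w)) - f' w, z - w⟫ := by
            rw [inner_sub_left]; ring
        _ ≤ ⟪f' w, z - w⟫ + L * (t * ‖z - w‖) * ‖z - w‖ := by
            gcongr
            exact (real_inner_le_norm _ _).trans (by gcongr)
        _ = ⟪f' w, z - w⟫ + L * ‖z - w‖ ^ 2 * t := by ring
  simp only [zero_smul, add_zero, one_smul, add_sub_cancel] at key
  linarith

theorem apply_gradient_step_le (hf : ∀ z, HasGradientAt f (f' z) z)
    (hlip : ∀ z w, ‖f' z - f' w‖ ≤ L * ‖z - w‖) (w : V) :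
    f (w - (1 / L) • f' w) ≤ f w - 1 / (2 * L) * ‖f' w‖ ^ 2 := by
  have h := le_add_inner_add_sq_of_lipschitz_gradient hf hlip (w - (1 / L) • f' w) w
  rw [sub_sub_cancel_left, inner_neg_right, norm_neg, real_inner_smul_right,
    real_inner_self_eq_norm_sq, norm_smul, mul_pow, Real.norm_eq_abs, sq_abs] at h
  rcases eq_or_ne L 0 with rfl | hL
  · simp
  · convert h using 1; field_simp; ring

/-- Proved by comparing the descent bound at `z = x - (∇f x - ∇f y) / L` with the convexity
bound at `z` from `y`. -/
theorem add_inner_add_sq_le_of_convex_of_lipschitz_gradient (hf : ∀ z, HasGradientAt f (f' z) z)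
    (hconv : ∀ z w, f w + ⟪f' w, z - w⟫ ≤ f z)
    (hlip : ∀ z w, ‖f' z - f' w‖ ≤ L * ‖z - w‖) (x y : V) :
    f y + ⟪f' y, x - y⟫ + 1 / (2 * L) * ‖f' x - f' y‖ ^ 2 ≤ f x := by
  have hup := le_add_inner_add_sq_of_lipschitz_gradient hf hlip (x - (1 / L) • (f' x - f' y)) x
  have hlow := hconv (x - (1 / L) • (f' x - f' y)) y
  rw [sub_sub_cancel_left, inner_neg_right, norm_neg, real_inner_smul_right, norm_smul, mul_pow,
    Real.norm_eq_abs, sq_abs] at hup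
  rw [sub_right_comm, inner_sub_right, real_inner_smul_right] at hlow
  have hd : ⟪f' x, f' x - f' y⟫ - ⟪f' y, f' x - f' y⟫ = ‖f' x - f' y‖ ^ 2 := by
    rw [← inner_sub_left, real_inner_self_eq_norm_sq]
  rcases eq_or_ne L 0 with rfl | hL
  · simp_all
  · have hcoef : 1 / (2 * L) = 1 / L - L / 2 * (1 / L) ^ 2 := by field_simp; ring
    rw [hcoef]
    linear_combination hup + hlow - (1 / L) * hd

end InnerProductSpace

theorem extra_gradient_one_step_decay_general
    {V : Type*} [NormedAddCommGroup V] [InnerProductSpace ℝ V] [CompleteSpace V]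
    (μ L : ℝ) (hμ : 0 ≤ μ) (hL : 0 < L) (f : V → ℝ) (f' : V → V)
    (hdiff : ∀ z, HasGradientAt f (f' z) z)
    (hconv : ∀ z w : V, f z - f w - ⟪f' w, z - w⟫ ≥ μ / 2 * ‖z - w‖ ^ 2)
    (hlip : ∀ z w : V, ‖f' z - f' w‖ ≤ L * ‖z - w‖)
    (xstar : V)
    (α β γ γp : ℝ) (hα : 0 < α) (hγ : 0 < γ)
    (hαγ : L * α ^ 2 = γ * (2 + α)) (hβ : β = 1 / (L * α))
    (x v y xp vp : V)
    (h1 : α⁻¹ • (y - x) = v - y - β • f' x)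
    (h2 : α⁻¹ • (vp - v) = (μ / γ) • (y - vp) - (1 / γ) • f' y)
    (h3 : (γp - γ) / α = μ - γp)
    (h4 : xp = y - (1 / L) • f' y) :
    (f xp - f xstar + γp / 2 * ‖vp - xstar‖ ^ 2)
        - (f x - f xstar + γ / 2 * ‖v - xstar‖ ^ 2)
      ≤ -(α * (f xp - f xstar + γp / 2 * ‖vp - xstar‖ ^ 2))
        - 1 / (2 * L) * ‖f' x‖ ^ 2 := by
  have hconv₀ (z w : V) : f w + ⟪f' w, z - w⟫ ≤ f z := by
    nlinarith [hconv z w, mul_nonneg hμ (sq_nonneg ‖z - w‖)]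
  have hx : x - y = (1 / L) • f' x - α • ((v - xstar) - (y - xstar)) := by
    have h := congrArg (α • ·) h1
    rw [hβ] at h
    simp only [smul_smul, mul_inv_cancel₀ hα.ne', one_smul, smul_sub] at h
    rw [show α * (1 / (L * α)) = 1 / L by field_simp] at h
    linear_combination (norm := module) -h
  have hv : (γ + α * μ) • (vp - xstar)
      = γ • (v - xstar) + (α * μ) • (y - xstar) - α • f' y := by
    have h := congrArg ((α * γ) • ·) h2
    simp only [smul_smul, smul_sub] at h
    rw [show α * γ * α⁻¹ = γ by field_simp, show α * γ * (μ / γ) = α * μ by field_simp,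
      show α * γ * (1 / γ) = α by field_simp] at h
    linear_combination (norm := module) h
  have hγp : (1 + α) * γp = γ + α * μ := by
    field_simp at h3
    linarith
  have hα2 : α ^ 2 / γ = (2 + α) / L := by
    field_simp
    linarith
  have hxp := h4 ▸ apply_gradient_step_le hdiff hlip y
  have hxy := add_inner_add_sq_le_of_convex_of_lipschitz_gradient hdiff hconv₀ hlip x y
  have hstar := hconv xstar y
  have hvp := mul_norm_sq_le_of_smul_eq hγ (mul_nonneg hα.le hμ) hv
  rw [hx, inner_sub_right, real_inner_smul_right, real_inner_smul_right, inner_sub_right,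
    norm_sub_sq_real, real_inner_comm (f' x)] at hxy
  rw [← neg_sub y xstar, inner_neg_right, norm_neg] at hstar
  linear_combination (1 + α) * hxp + hxy + α * hstar + hvp / 2
    + ‖vp - xstar‖ ^ 2 / 2 * hγp + ‖f' y‖ ^ 2 / 2 * hα2

/-- One step of the explicit HNAG scheme with an extra gradient step, with
`Lα² = γ(2+α)` and `β = 1/(Lα)`, contracts the Lyapunov function:
`L(x⁺,v⁺,γ⁺) - L(x,v,γ) ≤ -α L(x⁺,v⁺,γ⁺) - (1/(2L))‖∇f(x)‖²`. -/
theorem extra_gradient_one_step_decay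
    {V : Type*} [NormedAddCommGroup V] [InnerProductSpace ℝ V] [CompleteSpace V]
    (μ L : ℝ) (hμ : 0 ≤ μ) (hL : 0 < L) (f : V → ℝ) (f' : V → V)
    (hdiff : ∀ z, HasGradientAt f (f' z) z)
    (hconv : ∀ z w : V, f z - f w - ⟪f' w, z - w⟫ ≥ μ / 2 * ‖z - w‖ ^ 2)
    (hlip : ∀ z w : V, ‖f' z - f' w‖ ≤ L * ‖z - w‖)
    (xstar : V) (hmin : ∀ z, f xstar ≤ f z)
    (α β γ γp : ℝ) (hα : 0 < α) (hγ : 0 < γ)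
    (hαγ : L * α ^ 2 = γ * (2 + α)) (hβ : β = 1 / (L * α))
    (x v y xp vp : V)
    (h1 : α⁻¹ • (y - x) = v - y - β • f' x)
    (h2 : α⁻¹ • (vp - v) = (μ / γ) • (y - vp) - (1 / γ) • f' y)
    (h3 : (γp - γ) / α = μ - γp)
    (h4 : xp = y - (1 / L) • f' y) :
    (f xp - f xstar + γp / 2 * ‖vp - xstar‖ ^ 2)
        - (f x - f xstar + γ / 2 * ‖v - xstar‖ ^ 2)
      ≤ -(α * (f xp - f xstar + γp / 2 * ‖vp - xstar‖ ^ 2))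
        - 1 / (2 * L) * ‖f' x‖ ^ 2 :=
  extra_gradient_one_step_decay_general μ L hμ hL f f' hdiff hconv hlip xstar α β γ γp hα hγ hαγ hβ
    x v y xp vp h1 h2 h3 h4
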